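/- Let G be an amenable group (admitting a left-invariant finitely additive probability measure, equivalently an invariant mean μ : ℓ^∞(G; ℝ) → ℝ with μ(𝟙) = 1). Then for any nonzero integer n, the class of the constant function n·𝟙 in the coinvariants ℓ^∞(G; ℤ)_G is nonzero. -/

import Mathlib

/-- `φ : G → ℤ` is bounded. -/
def IsBdd {G : Type*} (φ : G → ℤ) : Prop := ∃ C : ℤ, ∀ x : G, |φ x| ≤ C

/-- `φ : G → ℝ` is bounded. -/
def IsBddR {G : Type*} (φ : G → ℝ) : Prop := ∃ C : ℝ, ∀ x : G, |φ x| ≤ C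

/-- The subgroup of `G → ℤ` generated by the elements `φ - g·φ`, where `φ` is bounded and
`(g·φ)(x) = φ(xg)`.  The coinvariants `ℓ^∞(G;ℤ)_G` is `ℓ^∞(G;ℤ)` modulo this subgroup, so
an element of `ℓ^∞(G;ℤ)` has nonzero class in the coinvariants iff it does not lie in this
subgroup. -/
def coinvariantsKernel (G : Type*) [Group G] : AddSubgroup (G → ℤ) :=
  AddSubgroup.closure
    {ψ : G → ℤ | ∃ φ : G → ℤ, IsBdd φ ∧ ∃ g : G, ψ = φ - fun x => φ (x * g)}

/-! Composed with `ℤ → ℝ`, the mean `μ` vanishes on every generator `φ - g·φ` by invariance, hence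
by additivity on the whole subgroup they generate; but on the constant function `n` it takes the
value `n ≠ 0`. -/

section Boundedness

variable {G : Type*}

theorem IsBdd.intCast {φ : G → ℤ} (h : IsBdd φ) : IsBddR (Int.cast ∘ φ) := by
  obtain ⟨C, hC⟩ := h
  exact ⟨C, fun x => by
    simpa only [Function.comp_apply, ← Int.cast_abs] using Int.cast_le.2 (hC x)⟩

theorem isBdd_zero : IsBdd (0 : G → ℤ) := ⟨0, fun _ => by simp⟩

theorem IsBdd.add {φ ψ : G → ℤ} (hφ : IsBdd φ) (hψ : IsBdd ψ) : IsBdd (φ + ψ) := by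
  obtain ⟨C, hC⟩ := hφ
  obtain ⟨D, hD⟩ := hψ
  exact ⟨C + D, fun x => (abs_add_le _ _).trans (add_le_add (hC x) (hD x))⟩

theorem IsBdd.neg {φ : G → ℤ} (h : IsBdd φ) : IsBdd (-φ) := by
  obtain ⟨C, hC⟩ := h
  exact ⟨C, fun x => by simpa using hC x⟩

theorem IsBdd.sub {φ ψ : G → ℤ} (hφ : IsBdd φ) (hψ : IsBdd ψ) : IsBdd (φ - ψ) := by
  simpa only [sub_eq_add_neg] using hφ.add hψ.neg

theorem IsBdd.comp_mul_right [Mul G] {φ : G → ℤ} (h : IsBdd φ) (g : G) :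
    IsBdd fun x => φ (x * g) := by
  obtain ⟨C, hC⟩ := h
  exact ⟨C, fun x => hC (x * g)⟩

theorem IsBddR.neg {φ : G → ℝ} (h : IsBddR φ) : IsBddR (-φ) := by
  obtain ⟨C, hC⟩ := h
  exact ⟨C, fun x => by simpa using hC x⟩

end Boundedness

section Cast

variable {G R : Type*} [AddGroupWithOne R]

theorem intCast_comp_add (φ ψ : G → ℤ) :
    (Int.cast ∘ (φ + ψ) : G → R) = Int.cast ∘ φ + Int.cast ∘ ψ :=
  funext fun _ => Int.cast_add _ _

theorem intCast_comp_neg (φ : G → ℤ) : (Int.cast ∘ (-φ) : G → R) = -(Int.cast ∘ φ) :=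
  funext fun _ => Int.cast_neg _

theorem intCast_comp_sub (φ ψ : G → ℤ) :
    (Int.cast ∘ (φ - ψ) : G → R) = Int.cast ∘ φ - Int.cast ∘ ψ :=
  funext fun _ => Int.cast_sub _ _

end Cast

section Mean

variable {G : Type*} {μ : (G → ℝ) → ℝ}

theorem mean_zero (hsmul : ∀ (c : ℝ) (φ : G → ℝ), IsBddR φ → μ (c • φ) = c * μ φ) :
    μ 0 = 0 := by
  simpa using hsmul 0 0 ⟨0, fun _ => by simp⟩

theorem mean_neg (hsmul : ∀ (c : ℝ) (φ : G → ℝ), IsBddR φ → μ (c • φ) = c * μ φ)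
    {φ : G → ℝ} (hφ : IsBddR φ) : μ (-φ) = -μ φ := by
  simpa using hsmul (-1) φ hφ

theorem mean_sub (hadd : ∀ φ ψ : G → ℝ, IsBddR φ → IsBddR ψ → μ (φ + ψ) = μ φ + μ ψ)
    (hsmul : ∀ (c : ℝ) (φ : G → ℝ), IsBddR φ → μ (c • φ) = c * μ φ)
    {φ ψ : G → ℝ} (hφ : IsBddR φ) (hψ : IsBddR ψ) : μ (φ - ψ) = μ φ - μ ψ := by
  rw [sub_eq_add_neg, hadd _ _ hφ hψ.neg, mean_neg hsmul hψ, sub_eq_add_neg]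

theorem isBdd_and_mean_eq_zero_of_mem_coinvariantsKernel [Group G]
    (hadd : ∀ φ ψ : G → ℝ, IsBddR φ → IsBddR ψ → μ (φ + ψ) = μ φ + μ ψ)
    (hsmul : ∀ (c : ℝ) (φ : G → ℝ), IsBddR φ → μ (c • φ) = c * μ φ)
    (hinv : ∀ (φ : G → ℝ), IsBddR φ → ∀ g : G, μ (fun x => φ (x * g)) = μ φ)
    {ψ : G → ℤ} (hψ : ψ ∈ coinvariantsKernel G) : IsBdd ψ ∧ μ (Int.cast ∘ ψ) = 0 := by
  induction hψ using AddSubgroup.closure_induction with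
  | mem ψ hψ =>
    obtain ⟨φ, hφ, g, rfl⟩ := hψ
    refine ⟨hφ.sub (hφ.comp_mul_right g), ?_⟩
    rw [intCast_comp_sub, mean_sub hadd hsmul hφ.intCast (hφ.comp_mul_right g).intCast]
    exact sub_eq_zero.2 (hinv _ hφ.intCast g).symm
  | zero => exact ⟨isBdd_zero, by simpa using mean_zero hsmul⟩
  | add φ ψ _ _ hφ hψ =>
    refine ⟨hφ.1.add hψ.1, ?_⟩
    rw [intCast_comp_add, hadd _ _ hφ.1.intCast hψ.1.intCast, hφ.2, hψ.2, add_zero]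
  | neg φ _ hφ =>
    refine ⟨hφ.1.neg, ?_⟩
    rw [intCast_comp_neg, mean_neg hsmul hφ.1.intCast, hφ.2, neg_zero]

end Mean

theorem const_class_nonzero_in_coinvariants_of_amenable_general {G : Type*} [Group G]
    -- an invariant mean on `ℓ^∞(G; ℝ)`, witnessing amenability of `G`
    (μ : (G → ℝ) → ℝ)
    (hadd : ∀ φ ψ : G → ℝ, IsBddR φ → IsBddR ψ → μ (φ + ψ) = μ φ + μ ψ)
    (hsmul : ∀ (c : ℝ) (φ : G → ℝ), IsBddR φ → μ (c • φ) = c * μ φ)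
    (hinv : ∀ (φ : G → ℝ), IsBddR φ → ∀ g : G, μ (fun x => φ (x * g)) = μ φ)
    (hone : μ (fun _ => (1 : ℝ)) = 1)
    (n : ℤ) (hn : n ≠ 0) :
    (fun _ : G => n) ∉ coinvariantsKernel G := by
  intro hmem
  have hconst : (Int.cast ∘ fun _ : G => n : G → ℝ) = (n : ℝ) • fun _ => (1 : ℝ) := by
    ext; simp
  have hmean := (isBdd_and_mean_eq_zero_of_mem_coinvariantsKernel hadd hsmul hinv hmem).2
  rw [hconst, hsmul _ _ ⟨1, fun _ => by simp⟩, hone, mul_one] at hmean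
  exact hn (Int.cast_eq_zero.1 hmean)

theorem const_class_nonzero_in_coinvariants_of_amenable {G : Type*} [Group G]
    -- an invariant mean on `ℓ^∞(G; ℝ)`, witnessing amenability of `G`
    (μ : (G → ℝ) → ℝ)
    (hadd : ∀ φ ψ : G → ℝ, IsBddR φ → IsBddR ψ → μ (φ + ψ) = μ φ + μ ψ)
    (hsmul : ∀ (c : ℝ) (φ : G → ℝ), IsBddR φ → μ (c • φ) = c * μ φ)
    (hpos : ∀ φ : G → ℝ, IsBddR φ → (∀ x, 0 ≤ φ x) → 0 ≤ μ φ)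
    (hinv : ∀ (φ : G → ℝ), IsBddR φ → ∀ g : G, μ (fun x => φ (x * g)) = μ φ)
    (hone : μ (fun _ => (1 : ℝ)) = 1)
    (n : ℤ) (hn : n ≠ 0) :
    (fun _ : G => n) ∉ coinvariantsKernel G :=
  const_class_nonzero_in_coinvariants_of_amenable_general μ hadd hsmul hinv hone n hn
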